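/- arXiv:2411.14928 — 2 statements merged into one kernel-verified Lean document; each statement's English description precedes it below -/
import Mathlib

section
/- Let λ > 0, n ≥ 1, and let (k, l) ∈ {(2,0), (1,1), (2,1)}. Define F_{k,l}(x) = x^{n+k} ∫_0^2 (x² + 2t)^{-λ - n/2 - 1} (2t - t²)^{λ-1} t^l dt for x > 0. Then for every nonnegative integer j there exists a constant C = C(n, λ, l, j) > 0 such that |F_{k,l}^{(j)}(x)| ≤ C x^{k - 2 - 2λ - j} for all x > 0. -/
open MeasureTheory Set

namespace FklAux

noncomputable def ww (lam : ℝ) (l : ℕ) (t : ℝ) : ℝ := (2*t - t^2)^(lam-1) * t^l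

lemma ww_nonneg (lam : ℝ) (l : ℕ) (t : ℝ) (ht : t ∈ Ioo (0:ℝ) 2) : 0 ≤ ww lam l t := by
  obtain ⟨h0, h2⟩ := ht
  exact mul_nonneg (Real.rpow_nonneg (by nlinarith) _) (pow_nonneg h0.le _)

lemma ww_continuousOn (lam : ℝ) (l : ℕ) : ContinuousOn (ww lam l) (Ioo 0 2) := by
  apply ContinuousOn.mul
  · apply ContinuousOn.rpow_const
    · fun_prop
    · intro t ht
      left
      obtain ⟨h0, h2⟩ := ht
      nlinarith
  · fun_prop

lemma ww_integrable (lam : ℝ) (hlam : 0 < lam) (l : ℕ) :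
    IntegrableOn (ww lam l) (Ioo 0 2) := by
  have h1 : IntegrableOn (fun t : ℝ => t ^ (lam - 1)) (Ioo 0 2) := by
    have := (intervalIntegral.intervalIntegrable_rpow' (a := 0) (b := 2) (r := lam - 1)
      (by linarith)).1
    exact (IntegrableOn.mono_set · Ioo_subset_Ioc_self) (by
      simpa using ((intervalIntegrable_iff_integrableOn_Ioc_of_le (by norm_num)).1
        (intervalIntegral.intervalIntegrable_rpow' (by linarith))))
  have h2 : IntegrableOn (fun t : ℝ => (2 - t) ^ (lam - 1)) (Ioo 0 2) := by
    have := (intervalIntegral.intervalIntegrable_rpow' (a := 0) (b := 2) (r := lam - 1)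
      (by linarith)).comp_sub_left 2
    simp only [sub_zero] at this
    norm_num at this
    exact (IntegrableOn.mono_set · Ioo_subset_Ioc_self)
      ((intervalIntegrable_iff_integrableOn_Ioc_of_le (by norm_num)).1 this.symm)
  have hbig : IntegrableOn (fun t : ℝ => 2^l * (t ^ (lam - 1) + (2 - t) ^ (lam - 1))) (Ioo 0 2) :=
    ((h1.add h2).const_mul _)
  apply hbig.integrable.mono' ((ww_continuousOn lam l).aestronglyMeasurable measurableSet_Ioo)
  filter_upwards [ae_restrict_mem measurableSet_Ioo] with t ht
  obtain ⟨h0, h2t⟩ := ht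
  have hfac : 2*t - t^2 = t * (2 - t) := by ring
  have hkey : (2*t - t^2)^(lam-1) ≤ t^(lam-1) + (2-t)^(lam-1) := by
    have ht2 : (0:ℝ) < 2 - t := by linarith
    have hA : (0:ℝ) ≤ t^(lam-1) := Real.rpow_nonneg h0.le _
    have hB : (0:ℝ) ≤ (2-t)^(lam-1) := Real.rpow_nonneg ht2.le _
    rcases le_or_gt lam 1 with hl | hl
    · rcases le_or_gt t 1 with htt | htt
      · have : t ≤ 2*t - t^2 := by nlinarith
        have := Real.rpow_le_rpow_of_nonpos (z := lam - 1) h0 this (by linarith)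
        linarith
      · have : 2 - t ≤ 2*t - t^2 := by nlinarith
        have := Real.rpow_le_rpow_of_nonpos (z := lam - 1) ht2 this (by linarith)
        linarith
    · rcases le_or_gt t 1 with htt | htt
      · have : 2*t - t^2 ≤ 2 - t := by nlinarith
        have := Real.rpow_le_rpow (z := lam - 1) (by nlinarith) this (by linarith)
        linarith
      · have : 2*t - t^2 ≤ t := by nlinarith
        have := Real.rpow_le_rpow (z := lam - 1) (by nlinarith) this (by linarith)
        linarith
  have hA' : (0:ℝ) ≤ t^(lam-1) := Real.rpow_nonneg h0.le _
  have hB' : (0:ℝ) ≤ (2-t)^(lam-1) := Real.rpow_nonneg (by linarith) _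
  have htl : t^l ≤ 2^l := pow_le_pow_left₀ h0.le h2t.le l
  have hw0 : 0 ≤ ww lam l t := ww_nonneg lam l t ⟨h0, h2t⟩
  rw [Real.norm_of_nonneg hw0]
  calc ww lam l t = (2*t - t^2)^(lam-1) * t^l := rfl
    _ ≤ (t^(lam-1) + (2-t)^(lam-1)) * 2^l := by
        apply mul_le_mul hkey htl (pow_nonneg h0.le _) (add_nonneg hA' hB')
    _ = 2^l * (t^(lam-1) + (2-t)^(lam-1)) := by ring

noncomputable def GG (lam : ℝ) (l : ℕ) (q : ℝ) (x : ℝ) : ℝ :=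
  ∫ t in Ioo (0:ℝ) 2, (x^2+2*t)^q * ww lam l t

variable {lam : ℝ} {l : ℕ}

lemma rpow_le_max {a b y r : ℝ} (ha : 0 < a) (hay : a ≤ y) (hyb : y ≤ b) :
    y ^ r ≤ max (a ^ r) (b ^ r) := by
  rcases le_or_gt 0 r with hr | hr
  · exact le_max_of_le_right (Real.rpow_le_rpow (by linarith) hyb hr)
  · exact le_max_of_le_left (Real.rpow_le_rpow_of_nonpos ha hay hr.le)

lemma integrand_continuousOn (q x : ℝ) :
    ContinuousOn (fun t : ℝ => (x^2+2*t)^q * ww lam l t) (Ioo 0 2) := by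
  apply ContinuousOn.mul _ (ww_continuousOn lam l)
  apply ContinuousOn.rpow_const (by fun_prop)
  intro t ht
  left
  nlinarith [sq_nonneg x, ht.1]

lemma GG_integrableOn (hlam : 0 < lam) (q x : ℝ) (hx : 0 < x) :
    IntegrableOn (fun t : ℝ => (x^2+2*t)^q * ww lam l t) (Ioo 0 2) := by
  have hM : IntegrableOn
      (fun t : ℝ => max ((x^2)^q) ((x^2+4)^q) * ww lam l t) (Ioo 0 2) :=
    (ww_integrable lam hlam l).const_mul _
  apply hM.integrable.mono'
    ((integrand_continuousOn q x).aestronglyMeasurable measurableSet_Ioo)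
  filter_upwards [ae_restrict_mem measurableSet_Ioo] with t ht
  have hw := ww_nonneg lam l t ht
  have hpos : (0:ℝ) < x^2 := by positivity
  have hle : (x^2+2*t)^q ≤ max ((x^2)^q) ((x^2+4)^q) :=
    rpow_le_max hpos (by linarith [ht.1]) (by linarith [ht.2])
  rw [Real.norm_of_nonneg (mul_nonneg (Real.rpow_nonneg (by nlinarith [ht.1]) _) hw)]
  exact mul_le_mul_of_nonneg_right hle hw

lemma GG_hasDerivAt (hlam : 0 < lam) (q x : ℝ) (hx : 0 < x) :
    HasDerivAt (GG lam l q) (2*x*q * GG lam l (q-1) x) x := by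
  set w : ℝ → ℝ := ww lam l with hw
  have key := hasDerivAt_integral_of_dominated_loc_of_deriv_le
    (μ := volume.restrict (Ioo (0:ℝ) 2)) (x₀ := x)
    (F := fun x t => (x^2+2*t)^q * w t)
    (F' := fun x t => (2*x*q) * ((x^2+2*t)^(q-1) * w t))
    (bound := fun t => (3*x*|q|) * (max (((x/2)^2)^(q-1)) (((3*x/2)^2+4)^(q-1)) * w t))
    (Metric.ball_mem_nhds x (half_pos hx))
    (Filter.Eventually.of_forall fun y =>
      (integrand_continuousOn q y).aestronglyMeasurable measurableSet_Ioo)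
    (GG_integrableOn hlam q x hx)
    (((integrand_continuousOn (q-1) x).aestronglyMeasurable measurableSet_Ioo).const_mul _)
    ?_ ?_ ?_
  · have h2 : (∫ t in Ioo (0:ℝ) 2, (2*x*q) * ((x^2+2*t)^(q-1) * w t))
        = 2*x*q * GG lam l (q-1) x := integral_const_mul _ _
    rw [← h2]
    exact key.2
  · filter_upwards [ae_restrict_mem measurableSet_Ioo] with t ht
    intro y hy
    rw [Metric.mem_ball, Real.dist_eq, abs_sub_lt_iff] at hy
    have hy1 : x/2 < y := by linarith [hy.2]
    have hy2 : y < 3*x/2 := by linarith [hy.1]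
    have hwn := ww_nonneg lam l t ht
    have hsq : (x/2)^2 ≤ y^2+2*t := by nlinarith [ht.1, half_pos hx]
    have hsq2 : y^2+2*t ≤ (3*x/2)^2+4 := by nlinarith [ht.2, half_pos hx]
    have hle : (y^2+2*t)^(q-1) ≤ max (((x/2)^2)^(q-1)) (((3*x/2)^2+4)^(q-1)) :=
      rpow_le_max (by positivity) hsq hsq2
    have hpos0 : (0:ℝ) ≤ (y^2+2*t)^(q-1) := Real.rpow_nonneg (by nlinarith [ht.1]) _
    have h1 : |2*y*q| ≤ 3*x*|q| := by
      rw [abs_mul, abs_of_pos (by linarith : (0:ℝ) < 2*y)]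
      exact mul_le_mul_of_nonneg_right (by linarith) (abs_nonneg q)
    have h2 : |(y^2+2*t)^(q-1) * w t|
        ≤ max (((x/2)^2)^(q-1)) (((3*x/2)^2+4)^(q-1)) * w t := by
      rw [abs_of_nonneg (mul_nonneg hpos0 hwn)]
      exact mul_le_mul_of_nonneg_right hle hwn
    calc ‖(2*y*q) * ((y^2+2*t)^(q-1) * w t)‖
        = |2*y*q| * |(y^2+2*t)^(q-1) * w t| := by rw [Real.norm_eq_abs, abs_mul]
      _ ≤ (3*x*|q|) * (max (((x/2)^2)^(q-1)) (((3*x/2)^2+4)^(q-1)) * w t) :=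
          mul_le_mul h1 h2 (abs_nonneg _) (by positivity)
  · exact ((ww_integrable lam hlam l).const_mul _).const_mul _
  · filter_upwards [ae_restrict_mem measurableSet_Ioo] with t ht
    intro y hy
    have hpos : (0:ℝ) < y^2+2*t := by nlinarith [ht.1, sq_nonneg y]
    have hd : HasDerivAt (fun z : ℝ => z^2+2*t) (2*y) y := by
      simpa using (hasDerivAt_pow 2 y).add_const (2*t)
    have := (hd.rpow_const (p := q) (Or.inl hpos.ne')).mul_const (w t)
    convert this using 1
    · rfl
    ring

lemma GG_nonneg (q x : ℝ) : 0 ≤ GG lam l q x := by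
  apply setIntegral_nonneg measurableSet_Ioo
  intro t ht
  exact mul_nonneg (Real.rpow_nonneg (by nlinarith [ht.1, sq_nonneg x]) _)
    (ww_nonneg lam l t ht)

lemma GG_le (hlam : 0 < lam) (q x : ℝ) (hq : q ≤ 0) (hx : 0 < x) :
    GG lam l q x ≤ (x^2)^q * ∫ t in Ioo (0:ℝ) 2, ww lam l t := by
  rw [← integral_const_mul]
  apply setIntegral_mono_on (GG_integrableOn hlam q x hx)
    ((ww_integrable lam hlam l).const_mul _) measurableSet_Ioo
  intro t ht
  exact mul_le_mul_of_nonneg_right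
    (Real.rpow_le_rpow_of_nonpos (by positivity) (by linarith [ht.1]) hq)
    (ww_nonneg lam l t ht)

noncomputable def coef (m : ℕ) (p : ℝ) : ℕ → ℕ → ℝ
  | 0, 0 => 1
  | 0, _+1 => 0
  | j+1, 0 => ((m:ℝ) - (j:ℝ)) * coef m p j 0
  | j+1, b+1 => ((m:ℝ) - (j:ℝ) + 2*((b:ℝ)+1)) * coef m p j (b+1)
      + 2*(p - (b:ℝ)) * coef m p j b

lemma coef_eq_zero (m : ℕ) (p : ℝ) : ∀ j b : ℕ, j < b → coef m p j b = 0 := by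
  intro j
  induction j with
  | zero =>
    intro b hb
    match b, hb with
    | b+1, _ => rfl
  | succ j ih =>
    intro b hb
    match b, hb with
    | b+1, hb =>
      have h1 : coef m p j (b+1) = 0 := ih _ (by omega)
      have h2 : coef m p j b = 0 := ih _ (by omega)
      show ((m:ℝ) - (j:ℝ) + 2*((b:ℝ)+1)) * coef m p j (b+1)
          + 2*(p - (b:ℝ)) * coef m p j b = 0
      rw [h1, h2]; ring

lemma key (hlam : 0 < lam) (m : ℕ) (p : ℝ) (F : ℝ → ℝ)
    (hF : Set.EqOn F (fun x => x^(m:ℤ) * GG lam l p x) (Ioi 0)) (j : ℕ) :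
    Set.EqOn (iteratedDerivWithin j F (Ioi 0))
      (fun x => ∑ b ∈ Finset.range (j+1),
        coef m p j b * (x^((m:ℤ) - (j:ℤ) + 2*(b:ℤ)) * GG lam l (p - (b:ℝ)) x)) (Ioi 0) := by
  induction j with
  | zero =>
    intro x hx
    rw [iteratedDerivWithin_zero]
    simpa [coef] using hF hx
  | succ j ih =>
    intro x hx
    have hx0 : (0:ℝ) < x := hx
    rw [iteratedDerivWithin_succ,
        derivWithin_of_isOpen isOpen_Ioi hx,
        (Filter.eventuallyEq_of_mem (isOpen_Ioi.mem_nhds hx) ih).deriv_eq]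
    have hder : HasDerivAt (fun x : ℝ => ∑ b ∈ Finset.range (j+1),
        coef m p j b * (x^((m:ℤ) - (j:ℤ) + 2*(b:ℤ)) * GG lam l (p - (b:ℝ)) x))
        (∑ b ∈ Finset.range (j+1), coef m p j b *
          ((((m:ℤ) - (j:ℤ) + 2*(b:ℤ) : ℤ):ℝ) * x^((m:ℤ) - (j:ℤ) + 2*(b:ℤ) - 1)
              * GG lam l (p - (b:ℝ)) x
            + x^((m:ℤ) - (j:ℤ) + 2*(b:ℤ)) * (2*x*(p - (b:ℝ)) * GG lam l (p - (b:ℝ) - 1) x)))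
        x := by
      apply HasDerivAt.fun_sum
      intro b _
      exact ((hasDerivAt_zpow _ x (Or.inl hx0.ne')).mul
        (GG_hasDerivAt hlam (p - (b:ℝ)) x hx0)).const_mul _
    rw [hder.deriv]
    have hsplit : ∀ b ∈ Finset.range (j+1), coef m p j b *
          ((((m:ℤ) - (j:ℤ) + 2*(b:ℤ) : ℤ):ℝ) * x^((m:ℤ) - (j:ℤ) + 2*(b:ℤ) - 1)
              * GG lam l (p - (b:ℝ)) x
            + x^((m:ℤ) - (j:ℤ) + 2*(b:ℤ)) * (2*x*(p - (b:ℝ)) * GG lam l (p - (b:ℝ) - 1) x))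
        = ((m:ℝ) - (j:ℝ) + 2*(b:ℝ)) * coef m p j b
            * (x^((m:ℤ) - ((j:ℤ)+1) + 2*(b:ℤ)) * GG lam l (p - (b:ℝ)) x)
          + 2*(p - (b:ℝ)) * coef m p j b
            * (x^((m:ℤ) - ((j:ℤ)+1) + 2*((b:ℤ)+1)) * GG lam l (p - ((b:ℝ)+1)) x) := by
      intro b _
      have e1 : (m:ℤ) - (j:ℤ) + 2*(b:ℤ) - 1 = (m:ℤ) - ((j:ℤ)+1) + 2*(b:ℤ) := by ring
      have e2 : (m:ℤ) - ((j:ℤ)+1) + 2*((b:ℤ)+1) = ((m:ℤ) - (j:ℤ) + 2*(b:ℤ)) + 1 := by ring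
      have e3 : p - ((b:ℝ)+1) = p - (b:ℝ) - 1 := by ring
      rw [e1, e2, e3, zpow_add_one₀ hx0.ne']
      push_cast
      ring
    rw [Finset.sum_congr rfl hsplit, Finset.sum_add_distrib]
    simp only [Nat.cast_add, Nat.cast_one]
    rw [Finset.sum_range_succ' (fun b => coef m p (j+1) b *
      (x ^ ((m:ℤ) - ((j:ℤ) + 1) + 2 * (b:ℤ)) * GG lam l (p - (b:ℝ)) x)) (j+1),
      Finset.sum_range_succ' (fun b => ((m:ℝ) - (j:ℝ) + 2*(b:ℝ)) * coef m p j b *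
      (x ^ ((m:ℤ) - ((j:ℤ)+1) + 2*(b:ℤ)) * GG lam l (p - (b:ℝ)) x)) j]
    push_cast
    have hterm : ∀ b ∈ Finset.range (j+1),
        coef m p (j+1) (b+1) * (x ^ ((m:ℤ) - ((j:ℤ)+1) + 2*((b:ℤ)+1)) * GG lam l (p - ((b:ℝ)+1)) x)
          = ((m:ℝ) - (j:ℝ) + 2*((b:ℝ)+1)) * coef m p j (b+1) *
              (x ^ ((m:ℤ) - ((j:ℤ)+1) + 2*((b:ℤ)+1)) * GG lam l (p - ((b:ℝ)+1)) x)
            + 2*(p - (b:ℝ)) * coef m p j b *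
              (x ^ ((m:ℤ) - ((j:ℤ)+1) + 2*((b:ℤ)+1)) * GG lam l (p - ((b:ℝ)+1)) x) := by
      intro b _
      show (((m:ℝ) - (j:ℝ) + 2*((b:ℝ)+1)) * coef m p j (b+1) + 2*(p - (b:ℝ)) * coef m p j b) * _ = _
      ring
    rw [Finset.sum_congr rfl hterm, Finset.sum_add_distrib,
        Finset.sum_range_succ (fun b => ((m:ℝ) - (j:ℝ) + 2*((b:ℝ)+1)) * coef m p j (b+1) *
          (x ^ ((m:ℤ) - ((j:ℤ)+1) + 2*((b:ℤ)+1)) * GG lam l (p - ((b:ℝ)+1)) x)) j,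
        coef_eq_zero m p j (j+1) (by omega)]
    have h0 : coef m p (j+1) 0 = ((m:ℝ) - (j:ℝ)) * coef m p j 0 := rfl
    rw [h0]
    ring

end FklAux

open FklAux

theorem Fkl_derivative_bounds (n : ℕ) (hn : 1 ≤ n) (lam : ℝ) (hlam : 0 < lam)
    (k l : ℕ) (hkl : (k, l) ∈ ({(2, 0), (1, 1), (2, 1)} : Set (ℕ × ℕ))) (j : ℕ) :
    ∃ C > 0, ∀ x > (0 : ℝ),
      |iteratedDerivWithin j
          (fun x : ℝ => x ^ (n + k) *
            ∫ t in Set.Ioo (0 : ℝ) 2,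
              (x ^ 2 + 2 * t) ^ (-lam - (n : ℝ) / 2 - 1) * (2 * t - t ^ 2) ^ (lam - 1) * t ^ l)
          (Set.Ioi 0) x|
        ≤ C * x ^ ((k : ℝ) - 2 - 2 * lam - j) := by
  set p : ℝ := -lam - (n : ℝ) / 2 - 1 with hp
  set m : ℕ := n + k with hm
  set F : ℝ → ℝ := fun x : ℝ => x ^ (n + k) *
      ∫ t in Set.Ioo (0 : ℝ) 2,
        (x ^ 2 + 2 * t) ^ p * (2 * t - t ^ 2) ^ (lam - 1) * t ^ l with hF
  have hFeq : Set.EqOn F (fun x => x^(m:ℤ) * GG lam l p x) (Ioi 0) := by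
    intro x hx
    simp only [hF, GG, ww, zpow_natCast, mul_assoc, hm]
  set W : ℝ := ∫ t in Ioo (0:ℝ) 2, ww lam l t with hW
  have hW0 : 0 ≤ W := setIntegral_nonneg measurableSet_Ioo (ww_nonneg lam l)
  refine ⟨(∑ b ∈ Finset.range (j+1), |coef m p j b|) * W + 1, by positivity, ?_⟩
  intro x hx
  have hx0 : (0:ℝ) < x := hx
  rw [key hlam m p F hFeq j hx]
  set E : ℝ := (k : ℝ) - 2 - 2 * lam - j with hE
  have hEpos : 0 < x ^ E := Real.rpow_pos_of_pos hx0 _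
  have hbound : ∀ b ∈ Finset.range (j+1),
      |coef m p j b * (x^((m:ℤ) - (j:ℤ) + 2*(b:ℤ)) * GG lam l (p - (b:ℝ)) x)|
        ≤ |coef m p j b| * (x ^ E * W) := by
    intro b _
    rw [abs_mul]
    apply mul_le_mul_of_nonneg_left _ (abs_nonneg _)
    have hy0 : 0 ≤ x^((m:ℤ) - (j:ℤ) + 2*(b:ℤ)) * GG lam l (p - (b:ℝ)) x :=
      mul_nonneg (zpow_nonneg hx0.le _) (GG_nonneg _ _)
    rw [abs_of_nonneg hy0]
    have hq : p - (b:ℝ) ≤ 0 := by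
      have : (0:ℝ) ≤ (n:ℝ) := Nat.cast_nonneg n
      have : (0:ℝ) ≤ (b:ℝ) := Nat.cast_nonneg b
      simp only [hp]; linarith
    have hG := GG_le (l := l) hlam (p - (b:ℝ)) x hq hx0
    calc x^((m:ℤ) - (j:ℤ) + 2*(b:ℤ)) * GG lam l (p - (b:ℝ)) x
        ≤ x^((m:ℤ) - (j:ℤ) + 2*(b:ℤ)) * ((x^2)^(p - (b:ℝ)) * W) :=
          mul_le_mul_of_nonneg_left hG (zpow_nonneg hx0.le _)
      _ = x ^ E * W := by
          rw [← Real.rpow_intCast x ((m:ℤ) - (j:ℤ) + 2*(b:ℤ)),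
              ← Real.rpow_natCast x 2, ← Real.rpow_mul hx0.le, ← mul_assoc,
              ← Real.rpow_add hx0]
          congr 2
          simp only [hE, hp, hm]
          push_cast
          ring
  calc |∑ b ∈ Finset.range (j+1),
        coef m p j b * (x^((m:ℤ) - (j:ℤ) + 2*(b:ℤ)) * GG lam l (p - (b:ℝ)) x)|
      ≤ ∑ b ∈ Finset.range (j+1),
        |coef m p j b * (x^((m:ℤ) - (j:ℤ) + 2*(b:ℤ)) * GG lam l (p - (b:ℝ)) x)| :=
        Finset.abs_sum_le_sum_abs _ _
    _ ≤ ∑ b ∈ Finset.range (j+1), |coef m p j b| * (x ^ E * W) :=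
        Finset.sum_le_sum hbound
    _ = (∑ b ∈ Finset.range (j+1), |coef m p j b|) * W * x ^ E := by
        rw [← Finset.sum_mul]; ring
    _ ≤ ((∑ b ∈ Finset.range (j+1), |coef m p j b|) * W + 1) * x ^ E := by
        apply mul_le_mul_of_nonneg_right (by linarith) hEpos.le
end

section
/- Let H be a Hilbert space, 0 < p < ∞, and let (A_k)_{k≥1} be a sequence of compact operators in the weak Schatten class L_{p,∞}(H) such that (i) A_k → A in the L_{p,∞} quasi-norm, and (ii) for each k the limit c_k = lim_{t→∞} t^{1/p} μ(t, A_k) exists. Then the sequence (c_k) converges, the limit lim_{t→∞} t^{1/p} μ(t, A) exists, and lim_{t→∞} t^{1/p} μ(t, A) = lim_{k→∞} c_k. -/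
open Filter

/-- The generalized singular value function `μ(t, T) = inf { ‖T - F‖ : rank F ≤ t }`. -/
noncomputable def mu {H₁ H₂ : Type*} [NormedAddCommGroup H₁] [NormedSpace ℂ H₁]
    [NormedAddCommGroup H₂] [NormedSpace ℂ H₂] (T : H₁ →L[ℂ] H₂) (t : ℝ) : ℝ :=
  sInf {c : ℝ | ∃ F : H₁ →L[ℂ] H₂,
    LinearMap.rank (F : H₁ →ₗ[ℂ] H₂) ≤ (⌊t⌋₊ : Cardinal) ∧ c = ‖T - F‖}

section aux
variable {H : Type*} [NormedAddCommGroup H] [NormedSpace ℂ H]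

lemma mu_set_nonempty (T : H →L[ℂ] H) (t : ℝ) :
    Set.Nonempty {c : ℝ | ∃ F : H →L[ℂ] H,
      LinearMap.rank (F : H →ₗ[ℂ] H) ≤ (⌊t⌋₊ : Cardinal) ∧ c = ‖T - F‖} :=
  ⟨‖T - 0‖, 0, by simp, rfl⟩

lemma mu_set_bddBelow (T : H →L[ℂ] H) (t : ℝ) :
    BddBelow {c : ℝ | ∃ F : H →L[ℂ] H,
      LinearMap.rank (F : H →ₗ[ℂ] H) ≤ (⌊t⌋₊ : Cardinal) ∧ c = ‖T - F‖} :=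
  ⟨0, fun x hx => by obtain ⟨F, _, rfl⟩ := hx; exact norm_nonneg _⟩

lemma mu_nonneg (T : H →L[ℂ] H) (t : ℝ) : 0 ≤ mu T t :=
  Real.sInf_nonneg (fun x hx => by obtain ⟨F, _, rfl⟩ := hx; exact norm_nonneg _)

lemma mu_le (T F : H →L[ℂ] H) {t : ℝ}
    (h : LinearMap.rank (F : H →ₗ[ℂ] H) ≤ (⌊t⌋₊ : Cardinal)) : mu T t ≤ ‖T - F‖ :=
  csInf_le (mu_set_bddBelow T t) ⟨F, h, rfl⟩

lemma rank_neg_coe (F : H →L[ℂ] H) :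
    LinearMap.rank ((-F : H →L[ℂ] H) : H →ₗ[ℂ] H) = LinearMap.rank (F : H →ₗ[ℂ] H) := by
  rw [ContinuousLinearMap.coe_neg]
  rw [show LinearMap.rank (-(F : H →ₗ[ℂ] H)) =
      Module.rank ℂ (LinearMap.range (-(F : H →ₗ[ℂ] H))) from rfl]
  rw [LinearMap.range_neg]

lemma mu_neg (T : H →L[ℂ] H) (t : ℝ) : mu (-T) t = mu T t := by
  unfold mu
  congr 1
  ext x
  constructor
  · rintro ⟨F, hF, rfl⟩
    refine ⟨-F, ?_, ?_⟩
    · rw [rank_neg_coe]; exact hF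
    · have : T - -F = -(-T - F) := by abel
      rw [this, norm_neg]
  · rintro ⟨F, hF, rfl⟩
    refine ⟨-F, ?_, ?_⟩
    · rw [rank_neg_coe]; exact hF
    · have : -T - -F = -(T - F) := by abel
      rw [this, norm_neg]

lemma mu_add_le (T S : H →L[ℂ] H) {t₁ t₂ : ℝ} (h₁ : 0 ≤ t₁) (h₂ : 0 ≤ t₂) :
    mu (T + S) (t₁ + t₂) ≤ mu T t₁ + mu S t₂ := by
  refine le_of_forall_pos_le_add fun ε hε => ?_
  obtain ⟨x, ⟨F, hF, rfl⟩, hx⟩ := Real.lt_sInf_add_pos (mu_set_nonempty T t₁) (half_pos hε)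
  obtain ⟨y, ⟨G, hG, rfl⟩, hy⟩ := Real.lt_sInf_add_pos (mu_set_nonempty S t₂) (half_pos hε)
  have hrank : LinearMap.rank ((F + G : H →L[ℂ] H) : H →ₗ[ℂ] H) ≤ (⌊t₁ + t₂⌋₊ : Cardinal) := by
    rw [ContinuousLinearMap.coe_add]
    refine le_trans (LinearMap.rank_add_le _ _) ?_
    refine le_trans (add_le_add hF hG) ?_
    rw [← Nat.cast_add]
    refine Nat.cast_le.mpr (Nat.le_floor ?_)
    push_cast
    exact add_le_add (Nat.floor_le h₁) (Nat.floor_le h₂)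
  calc mu (T + S) (t₁ + t₂) ≤ ‖(T + S) - (F + G)‖ := mu_le _ _ hrank
    _ ≤ ‖T - F‖ + ‖S - G‖ := by
        have : (T + S) - (F + G) = (T - F) + (S - G) := by abel
        rw [this]; exact norm_add_le _ _
    _ ≤ mu T t₁ + mu S t₂ + ε := by
        unfold mu; linarith

lemma mu_approx (T S : H →L[ℂ] H) {t δ : ℝ} (ht : 0 < t) (hδ : 0 < δ) :
    mu T ((1 + δ) * t) ≤ mu S t + mu (T - S) (δ * t) := by
  have e : (1 + δ) * t = t + δ * t := by ring
  rw [e]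
  have h := mu_add_le (t₁ := t) (t₂ := δ * t) S (T - S) ht.le (by positivity)
  simpa using h

lemma mu_sub_split (T S R : H →L[ℂ] H) {s : ℝ} (hs : 0 ≤ s) :
    mu (T - S) s ≤ mu (T - R) (s / 2) + mu (S - R) (s / 2) := by
  have h := mu_add_le (t₁ := s / 2) (t₂ := s / 2) (T - R) (R - S) (by linarith) (by linarith)
  have e : (T - R) + (R - S) = T - S := by abel
  have e2 : s / 2 + s / 2 = s := by ring
  rw [e, e2] at h
  have e3 : mu (R - S) (s / 2) = mu (S - R) (s / 2) := by
    rw [← mu_neg (S - R)]; congr 1; abel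
  linarith [h, e3.le, e3.ge]

end aux

section master
variable {H : Type*} [NormedAddCommGroup H] [NormedSpace ℂ H]

lemma mu_master {q : ℝ} (hq : 0 < q) (T S : H →L[ℂ] H) {t δ : ℝ} (ht : 0 < t) (hδ : 0 < δ) :
    ((1 + δ) * t) ^ q * mu T ((1 + δ) * t) ≤
      (1 + δ) ^ q * (t ^ q * mu S t) +
        ((1 + δ) ^ q / δ ^ q) * ((δ * t) ^ q * mu (T - S) (δ * t)) := by
  have e1 : ((1 + δ) * t) ^ q = (1 + δ) ^ q * t ^ q :=
    Real.mul_rpow (by positivity) ht.le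
  have e2 : (δ * t) ^ q = δ ^ q * t ^ q := Real.mul_rpow hδ.le ht.le
  have hδq : (0:ℝ) < δ ^ q := Real.rpow_pos_of_pos hδ _
  have h1 := mu_approx T S ht hδ
  calc ((1 + δ) * t) ^ q * mu T ((1 + δ) * t)
      ≤ ((1 + δ) * t) ^ q * (mu S t + mu (T - S) (δ * t)) :=
        mul_le_mul_of_nonneg_left h1 (by positivity)
    _ = (1 + δ) ^ q * (t ^ q * mu S t) +
        ((1 + δ) ^ q / δ ^ q) * ((δ * t) ^ q * mu (T - S) (δ * t)) := by
        rw [e1, e2]; field_simp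

lemma exists_delta {q : ℝ} (hq : 0 < q) (X θ : ℝ) (hX : 0 ≤ X) (hθ : 0 < θ) :
    ∃ δ : ℝ, 0 < δ ∧ δ ≤ 1 ∧ ((1 + δ) ^ q - 1) * X ≤ θ := by
  have h1 : ContinuousAt (fun δ : ℝ => 1 + δ) 0 := by fun_prop
  have h2 : ContinuousAt (fun x : ℝ => x ^ q) ((fun δ : ℝ => 1 + δ) 0) :=
    Real.continuousAt_rpow_const _ _ (Or.inl (by norm_num))
  have hcont : ContinuousAt (fun δ : ℝ => (1 + δ) ^ q) 0 := h2.comp h1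
  have hval : (fun δ : ℝ => (1 + δ) ^ q) 0 = 1 := by norm_num
  have htend : Tendsto (fun δ : ℝ => (1 + δ) ^ q) (nhds 0) (nhds 1) := by
    have h := hcont.tendsto
    simpa using h
  have hlt : (1:ℝ) < 1 + θ / (X + 1) := by
    have : 0 < θ / (X + 1) := by positivity
    linarith
  have hev1 : ∀ᶠ δ in nhds (0:ℝ), (1 + δ) ^ q < 1 + θ / (X + 1) :=
    htend.eventually (eventually_lt_nhds hlt)
  have hev2 : ∀ᶠ δ in nhds (0:ℝ), δ < 1 := eventually_lt_nhds one_pos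
  obtain ⟨δ, hδ, hmem⟩ :=
    ((eventually_nhdsWithin_of_eventually_nhds (s := Set.Ioi (0:ℝ)) (hev1.and hev2)).and
      eventually_mem_nhdsWithin).exists
  refine ⟨δ, hmem, hδ.2.le, ?_⟩
  have hδq : (1 + δ) ^ q - 1 ≤ θ / (X + 1) := by linarith [hδ.1]
  have he : (θ / (X + 1)) * (X + 1) = θ := by field_simp
  nlinarith [mul_le_mul_of_nonneg_right hδq hX, div_nonneg hθ.le (by linarith : (0:ℝ) ≤ X + 1)]

end master


/-- Birman–Solomyak approximation lemma. -/
theorem birman_solomyak_approx {H : Type*} [NormedAddCommGroup H]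
    [InnerProductSpace ℂ H] [CompleteSpace H]
    (p : ℝ) (hp : 0 < p) (A : H →L[ℂ] H) (As : ℕ → H →L[ℂ] H) (c : ℕ → ℝ)
    (hcpt : ∀ k, IsCompactOperator (As k))
    (hmem : ∀ k, ∃ C : ℝ, ∀ t > (0 : ℝ), t ^ (1 / p) * mu (As k) t ≤ C)
    (hconv : ∀ ε > (0 : ℝ), ∃ N : ℕ, ∀ k ≥ N, ∀ t > (0 : ℝ), t ^ (1 / p) * mu (As k - A) t ≤ ε)
    (hlim : ∀ k, Tendsto (fun t : ℝ => t ^ (1 / p) * mu (As k) t) atTop (nhds (c k))) :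
    ∃ L : ℝ, Tendsto c atTop (nhds L) ∧
      Tendsto (fun t : ℝ => t ^ (1 / p) * mu A t) atTop (nhds L) := by
  clear hcpt hmem
  have hq : 0 < 1 / p := by positivity
  have h2q : (0:ℝ) < 2 ^ (1/p) := Real.rpow_pos_of_pos two_pos _
  have h2q1 : (1:ℝ) ≤ 2 ^ (1/p) := by
    calc (1:ℝ) = 1 ^ (1/p) := (Real.one_rpow _).symm
    _ ≤ 2 ^ (1/p) := Real.rpow_le_rpow zero_le_one one_le_two hq.le
  -- nonnegativity of c
  have hc0 : ∀ k, 0 ≤ c k := fun k =>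
    ge_of_tendsto (hlim k) ((eventually_gt_atTop 0).mono fun t ht =>
      mul_nonneg (Real.rpow_nonneg ht.le _) (mu_nonneg _ _))
  -- splitting bound for differences
  have hsplit : ∀ j k : ℕ, ∀ η : ℝ,
      (∀ s > (0:ℝ), s ^ (1/p) * mu (As j - A) s ≤ η) →
      (∀ s > (0:ℝ), s ^ (1/p) * mu (As k - A) s ≤ η) →
      ∀ s > (0:ℝ), s ^ (1/p) * mu (As j - As k) s ≤ 2 ^ (1/p) * (2 * η) := by
    intro j k η hj hk s hs
    have h2 : (0:ℝ) < s / 2 := by linarith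
    have hmu : mu (As j - As k) s ≤ mu (As j - A) (s/2) + mu (As k - A) (s/2) :=
      mu_sub_split _ _ _ hs.le
    have es : s ^ (1/p) = 2 ^ (1/p) * (s/2) ^ (1/p) := by
      rw [← Real.mul_rpow (by norm_num) h2.le]; congr 1; ring
    have hmul : (s/2) ^ (1/p) * mu (As j - As k) s ≤
        (s/2) ^ (1/p) * mu (As j - A) (s/2) + (s/2) ^ (1/p) * mu (As k - A) (s/2) := by
      rw [← mul_add]; exact mul_le_mul_of_nonneg_left hmu (by positivity)
    have hb := add_le_add (hj (s/2) h2) (hk (s/2) h2)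
    calc s ^ (1/p) * mu (As j - As k) s
        = 2 ^ (1/p) * ((s/2) ^ (1/p) * mu (As j - As k) s) := by rw [es]; ring
      _ ≤ 2 ^ (1/p) * (2 * η) := mul_le_mul_of_nonneg_left (by linarith) h2q.le
  -- limit comparison for c's
  have key1 : ∀ j k : ℕ, ∀ δ : ℝ, 0 < δ → ∀ E : ℝ,
      (∀ s > (0:ℝ), s ^ (1/p) * mu (As j - As k) s ≤ E) →
      c j ≤ (1+δ) ^ (1/p) * c k + ((1+δ) ^ (1/p) / δ ^ (1/p)) * E := by
    intro j k δ hδ E hE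
    have hmono : Tendsto (fun t : ℝ => (1+δ) * t) atTop atTop :=
      Tendsto.const_mul_atTop (by linarith) tendsto_id
    have h1 : Tendsto (fun t : ℝ => ((1+δ)*t) ^ (1/p) * mu (As j) ((1+δ)*t))
        atTop (nhds (c j)) := (hlim j).comp hmono
    have h2 : Tendsto (fun t : ℝ => (1+δ)^(1/p) * (t ^ (1/p) * mu (As k) t)
          + ((1+δ)^(1/p)/δ^(1/p)) * E)
        atTop (nhds ((1+δ)^(1/p) * c k + ((1+δ)^(1/p)/δ^(1/p)) * E)) :=
      ((hlim k).const_mul _).add_const _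
    refine le_of_tendsto_of_tendsto h1 h2 ?_
    filter_upwards [eventually_gt_atTop 0] with t ht
    refine le_trans (mu_master hq (As j) (As k) ht hδ) ?_
    have hEt := hE (δ*t) (by positivity)
    have hcoef : (0:ℝ) ≤ (1+δ)^(1/p)/δ^(1/p) := by positivity
    exact add_le_add_right (mul_le_mul_of_nonneg_left hEt hcoef) _
  -- pointwise bounds involving A
  have key2 : ∀ k : ℕ, ∀ δ : ℝ, 0 < δ → ∀ η : ℝ,
      (∀ s > (0:ℝ), s ^ (1/p) * mu (As k - A) s ≤ η) →
      ∀ t > (0:ℝ), ((1+δ)*t) ^ (1/p) * mu A ((1+δ)*t) ≤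
        (1+δ)^(1/p) * (t ^ (1/p) * mu (As k) t) + ((1+δ)^(1/p)/δ^(1/p)) * η := by
    intro k δ hδ η hη t ht
    refine le_trans (mu_master hq A (As k) ht hδ) ?_
    have hneg : A - As k = -(As k - A) := by abel
    have hμeq : mu (A - As k) (δ*t) = mu (As k - A) (δ*t) := by rw [hneg, mu_neg]
    have hηt := hη (δ*t) (by positivity)
    have hcoef : (0:ℝ) ≤ (1+δ)^(1/p)/δ^(1/p) := by positivity
    refine add_le_add_right (mul_le_mul_of_nonneg_left ?_ hcoef) _
    rw [hμeq]; exact hηt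
  have key3 : ∀ k : ℕ, ∀ δ : ℝ, 0 < δ → ∀ η : ℝ,
      (∀ s > (0:ℝ), s ^ (1/p) * mu (As k - A) s ≤ η) →
      ∀ t > (0:ℝ), ((1+δ)*t) ^ (1/p) * mu (As k) ((1+δ)*t) ≤
        (1+δ)^(1/p) * (t ^ (1/p) * mu A t) + ((1+δ)^(1/p)/δ^(1/p)) * η := by
    intro k δ hδ η hη t ht
    refine le_trans (mu_master hq (As k) A ht hδ) ?_
    have hηt := hη (δ*t) (by positivity)
    have hcoef : (0:ℝ) ≤ (1+δ)^(1/p)/δ^(1/p) := by positivity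
    exact add_le_add_right (mul_le_mul_of_nonneg_left hηt hcoef) _
  -- uniform bound on (c k) for large k
  obtain ⟨N₁, hN₁⟩ := hconv 1 one_pos
  obtain ⟨M, hMdef⟩ : ∃ x : ℝ, x = 2 ^ (1/p) * c N₁ + (2^(1/p)/1^(1/p)) * (2^(1/p) * (2*1)) := ⟨_, rfl⟩
  have hM0 : 0 ≤ M := by
    rw [hMdef, Real.one_rpow]
    have := hc0 N₁
    positivity
  have hM : ∀ k ≥ N₁, c k ≤ M := by
    intro k hk
    have hE := hsplit k N₁ 1 (hN₁ k hk) (hN₁ N₁ le_rfl)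
    have h := key1 k N₁ 1 one_pos (2^(1/p) * (2*1)) hE
    norm_num at h ⊢
    rw [hMdef]
    norm_num [Real.one_rpow]
    convert h using 2 <;> norm_num
  -- (c k) is Cauchy
  have hcs : CauchySeq c := by
    rw [Metric.cauchySeq_iff]
    intro ε hε
    obtain ⟨δ, hδpos, hδ1, hδX⟩ := exists_delta hq M (ε/4) hM0 (by positivity)
    have hδq : (0:ℝ) < δ ^ (1/p) := Real.rpow_pos_of_pos hδpos _
    have hD1 : (1:ℝ) ≤ (1+δ)^(1/p) := by
      calc (1:ℝ) = 1 ^ (1/p) := (Real.one_rpow _).symm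
      _ ≤ (1+δ)^(1/p) := Real.rpow_le_rpow zero_le_one (by linarith) hq.le
    have hD2 : (1+δ)^(1/p) ≤ 2^(1/p) :=
      Real.rpow_le_rpow (by linarith) (by linarith) hq.le
    obtain ⟨η, hηdef⟩ : ∃ x : ℝ, x = (ε/4) * δ^(1/p) / (2^(1/p) * 2^(1/p) * 2) := ⟨_, rfl⟩
    have hηpos : 0 < η := by rw [hηdef]; positivity
    obtain ⟨N₂, hN₂⟩ := hconv η hηpos
    refine ⟨max N₁ N₂, fun m hm n hn => ?_⟩
    have main : ∀ j l : ℕ, j ≥ max N₁ N₂ → l ≥ max N₁ N₂ → c j - c l < ε := by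
      intro j l hj hl
      have hE := hsplit j l η (hN₂ j (le_trans (le_max_right _ _) hj))
        (hN₂ l (le_trans (le_max_right _ _) hl))
      have h := key1 j l δ hδpos (2^(1/p) * (2*η)) hE
      have hterm : ((1+δ)^(1/p)/δ^(1/p)) * (2^(1/p) * (2*η)) ≤ ε/4 := by
        rw [hηdef]
        rw [div_mul_eq_mul_div, div_le_iff₀ hδq]
        have h1 : 2 ^ (1/p) * (2 * (ε / 4 * δ ^ (1/p) / (2 ^ (1/p) * 2 ^ (1/p) * 2)))
            = (ε/4) * (δ^(1/p) / 2^(1/p)) := by field_simp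
        rw [h1]
        calc (1+δ)^(1/p) * ((ε/4) * (δ^(1/p) / 2^(1/p)))
            ≤ 2^(1/p) * ((ε/4) * (δ^(1/p) / 2^(1/p))) :=
            mul_le_mul_of_nonneg_right hD2 (by positivity)
          _ = ε/4 * δ^(1/p) := by field_simp
      have hcl : c l ≤ M := hM l (le_trans (le_max_left _ _) hl)
      have h5 : ((1+δ)^(1/p) - 1) * c l ≤ ((1+δ)^(1/p) - 1) * M :=
        mul_le_mul_of_nonneg_left hcl (by linarith)
      linarith only [h, hterm, h5, hδX, hε]
    rw [Real.dist_eq, abs_sub_lt_iff]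
    exact ⟨main m n hm hn, main n m hn hm⟩
  obtain ⟨L, hL⟩ := cauchySeq_tendsto_of_complete hcs
  have hL0 : 0 ≤ L := ge_of_tendsto hL (Eventually.of_forall hc0)
  refine ⟨L, hL, ?_⟩
  rw [Metric.tendsto_atTop]
  intro ε hε
  obtain ⟨ε₀, hε₀def⟩ : ∃ x : ℝ, x = min ε 1 := ⟨_, rfl⟩
  have hε₀pos : 0 < ε₀ := hε₀def ▸ lt_min hε one_pos
  have hε₀le : ε₀ ≤ ε := hε₀def ▸ min_le_left _ _
  obtain ⟨δ, hδpos, hδ1, hδX⟩ := exists_delta hq (L+1) (ε₀/4) (by linarith) (by positivity)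
  have hδq : (0:ℝ) < δ ^ (1/p) := Real.rpow_pos_of_pos hδpos _
  have hδ0 : (0:ℝ) < 1 + δ := by linarith
  have hD1 : (1:ℝ) ≤ (1+δ)^(1/p) := by
    calc (1:ℝ) = 1 ^ (1/p) := (Real.one_rpow _).symm
    _ ≤ (1+δ)^(1/p) := Real.rpow_le_rpow zero_le_one (by linarith) hq.le
  have hD2 : (1+δ)^(1/p) ≤ 2^(1/p) :=
    Real.rpow_le_rpow (by linarith) (by linarith) hq.le
  obtain ⟨η, hηdef⟩ : ∃ x : ℝ, x = (ε₀/8) * δ^(1/p) / 2^(1/p) := ⟨_, rfl⟩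
  have hηpos : 0 < η := by rw [hηdef]; positivity
  have hterm : ((1+δ)^(1/p)/δ^(1/p)) * η ≤ ε₀/8 := by
    rw [hηdef, div_mul_eq_mul_div, div_le_iff₀ hδq]
    calc (1+δ)^(1/p) * (ε₀/8 * δ^(1/p) / 2^(1/p))
        ≤ 2^(1/p) * (ε₀/8 * δ^(1/p) / 2^(1/p)) :=
          mul_le_mul_of_nonneg_right hD2 (by positivity)
      _ = ε₀/8 * δ^(1/p) := by field_simp
  obtain ⟨N₂, hN₂⟩ := hconv η hηpos
  obtain ⟨ε'', hε''def⟩ : ∃ x : ℝ, x = ε₀ / (8 * 2^(1/p)) := ⟨_, rfl⟩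
  have hε''pos : 0 < ε'' := by rw [hε''def]; positivity
  have hε''q : 2^(1/p) * ε'' = ε₀/8 := by rw [hε''def]; field_simp
  obtain ⟨N₃, hN₃⟩ := Metric.tendsto_atTop.mp hL ε'' hε''pos
  obtain ⟨k, hkdef⟩ : ∃ x : ℕ, x = max N₂ N₃ := ⟨_, rfl⟩
  have hck : |c k - L| < ε'' := by
    have := hN₃ k (hkdef ▸ le_max_right N₂ N₃)
    rwa [Real.dist_eq] at this
  have hckup : c k ≤ L + ε'' := by
    rw [abs_sub_lt_iff] at hck; linarith [hck.1]
  have hcklo : L - ε'' ≤ c k := by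
    rw [abs_sub_lt_iff] at hck; linarith [hck.2]
  have hηk : ∀ s > (0:ℝ), s ^ (1/p) * mu (As k - A) s ≤ η :=
    hN₂ k (hkdef ▸ le_max_left N₂ N₃)
  obtain ⟨T₁, hT₁⟩ := Metric.tendsto_atTop.mp (hlim k) ε'' hε''pos
  obtain ⟨T₂, hT₂def⟩ : ∃ x : ℝ, x = max T₁ 1 := ⟨_, rfl⟩
  have hT₂pos : (0:ℝ) < T₂ := hT₂def ▸ lt_of_lt_of_le one_pos (le_max_right T₁ 1)
  have hT₁T₂ : T₁ ≤ T₂ := hT₂def ▸ le_max_left T₁ 1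
  have hDe : (1+δ)^(1/p) * ε'' ≤ ε₀/8 := by
    calc (1+δ)^(1/p) * ε'' ≤ 2^(1/p) * ε'' :=
          mul_le_mul_of_nonneg_right hD2 hε''pos.le
      _ = ε₀/8 := hε''q
  have hDL : (1+δ)^(1/p) * L ≤ L + ε₀/4 := by
    have h1 : ((1+δ)^(1/p) - 1) * (L+1) =
        (1+δ)^(1/p) * L + (1+δ)^(1/p) - L - 1 := by ring
    rw [h1] at hδX
    linarith only [hδX, hD1]
  have hDε : ε₀ ≤ (1+δ)^(1/p) * ε₀ := le_mul_of_one_le_left hε₀pos.le hD1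
  refine ⟨(1+δ) * T₂, fun s hs => ?_⟩
  have hsT₂ : T₂ ≤ s := by
    have h0 : 0 ≤ δ * T₂ := (mul_pos hδpos hT₂pos).le
    linarith only [hs, h0]
  have hs0 : 0 < s := lt_of_lt_of_le hT₂pos hsT₂
  have hfA0 : 0 ≤ s ^ (1/p) * mu A s :=
    mul_nonneg (Real.rpow_nonneg hs0.le _) (mu_nonneg _ _)
  -- upper bound
  have hupper : s ^ (1/p) * mu A s ≤ L + 5*ε₀/8 := by
    obtain ⟨t, htdef⟩ : ∃ x : ℝ, x = s / (1+δ) := ⟨_, rfl⟩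
    have ht0 : 0 < t := by rw [htdef]; positivity
    have hts : (1+δ) * t = s := by rw [htdef]; field_simp
    have htT : T₁ ≤ t := by
      rw [htdef, le_div_iff₀ hδ0]
      calc T₁ * (1+δ) = (1+δ) * T₁ := by ring
        _ ≤ (1+δ) * T₂ := mul_le_mul_of_nonneg_left hT₁T₂ (by linarith only [hδpos])
        _ ≤ s := hs
    have hfk : t ^ (1/p) * mu (As k) t ≤ c k + ε'' := by
      have := hT₁ t htT
      rw [Real.dist_eq, abs_sub_lt_iff] at this
      linarith [this.1]
    have h := key2 k δ hδpos η hηk t ht0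
    rw [hts] at h
    have hstep : (1+δ)^(1/p) * (t ^ (1/p) * mu (As k) t) ≤
        (1+δ)^(1/p) * (L + 2*ε'') :=
      mul_le_mul_of_nonneg_left (by linarith) (by linarith)
    linarith only [h, hstep, hterm, hDL, hDe]
  -- lower bound
  have hlower : L - ε₀ < s ^ (1/p) * mu A s := by
    have h3 := key3 k δ hδpos η hηk s hs0
    have hT₁s : T₁ ≤ (1+δ) * s := by
      have h0 : 0 ≤ δ * s := (mul_pos hδpos hs0).le
      linarith only [hT₁T₂, hsT₂, h0]
    have hfk2 : c k - ε'' ≤ ((1+δ)*s) ^ (1/p) * mu (As k) ((1+δ)*s) := by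
      have := hT₁ ((1+δ)*s) hT₁s
      rw [Real.dist_eq, abs_sub_lt_iff] at this
      linarith [this.2]
    have hDfA : L - 3*ε₀/8 ≤ (1+δ)^(1/p) * (s ^ (1/p) * mu A s) := by
      have h2e : 2*ε'' ≤ ε₀/4 := by
        have h0 : 0 ≤ (2^(1/p) - 1) * ε'' :=
          mul_nonneg (by linarith only [h2q1]) hε''pos.le
        linarith only [hε''q, h0]
      linarith only [h3, hfk2, hterm, hcklo, h2e]
    by_contra hcon
    push_neg at hcon
    have hmul : (1+δ)^(1/p) * (s ^ (1/p) * mu A s) ≤ (1+δ)^(1/p) * (L - ε₀) :=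
      mul_le_mul_of_nonneg_left hcon (by linarith)
    have hexp : (1+δ)^(1/p) * (L - ε₀) =
        (1+δ)^(1/p) * L - (1+δ)^(1/p) * ε₀ := by ring
    rw [hexp] at hmul
    linarith only [hmul, hDfA, hDL, hDε, hε₀pos]
  rw [Real.dist_eq, abs_sub_lt_iff]
  constructor
  · calc s ^ (1/p) * mu A s - L ≤ 5*ε₀/8 := by linarith
      _ < ε := by linarith
  · linarith
end
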